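/- Let A be a set of consecutive integers and T a standard Young tableau such that, for every pair of elements of A, no two lie in the same column of T (the boxes of A form a horizontal strip in T). Then the vector Σ_{π ∈ S_A} λ(π)|T⟩ is nonzero in the Young orthogonal representation. -/

import Mathlib

/-!
Let `M` be the span of the `|T'⟩` for the tableaux `T'` that agree with `T` outside `A`;
`S_A` maps `M` to itself. Define `φ |T'⟩` as the product, over the inversions `i < j` of `A`
in `T'` (`j` in a column left of `i`), of `√((r - 1)/(r + 1))`, where `r` is the content
difference of the boxes of `i` and `j`. Because `A` is a horizontal strip, every box further
right is weakly higher, so these `r` are at least `2` and `φ |T⟩ > 0`; and the identities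
`a + b √((r-1)/(r+1)) = 1` and `-a √((r-1)/(r+1)) + b = √((r-1)/(r+1))` for the Young
coefficients `a = 1/r`, `b = √(1 - a²)` show that `φ` is invariant under every adjacent
transposition in `S_A`, hence under `S_A`. Thus `φ` maps the sum to `|S_A| φ |T⟩ ≠ 0`.
-/

/-- A standard Young tableau of shape `μ`, recorded by the position `pos k` of the
entry `k` (entries are `0`-indexed, running over `0, …, μ.card - 1`). Entries
strictly increase along rows (left to right) and down columns. -/
structure SYT (μ : YoungDiagram) where
  pos : ℕ → ℕ × ℕ
  mem : ∀ k, k < μ.card → pos k ∈ μ.cells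
  surj : ∀ c ∈ μ.cells, ∃ k, k < μ.card ∧ pos k = c
  inj : ∀ k l, k < μ.card → l < μ.card → pos k = pos l → k = l
  row_incr : ∀ k l, k < μ.card → l < μ.card →
    (pos k).1 = (pos l).1 → (pos k).2 < (pos l).2 → k < l
  col_incr : ∀ k l, k < μ.card → l < μ.card →
    (pos k).2 = (pos l).2 → (pos k).1 < (pos l).1 → k < l
  out : ∀ k, μ.card ≤ k → pos k = (0, 0)

/-- Entries `k` and `k+1` lie in the same row of `T`. -/
def SYT.sameRow {μ : YoungDiagram} (T : SYT μ) (k : ℕ) : Prop :=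
  (T.pos k).1 = (T.pos (k + 1)).1

/-- Entries `k` and `k+1` lie in the same column of `T`. -/
def SYT.sameCol {μ : YoungDiagram} (T : SYT μ) (k : ℕ) : Prop :=
  (T.pos k).2 = (T.pos (k + 1)).2

/-- `T'` is the tableau `(k, k+1) T` obtained from `T` by exchanging the entries
`k` and `k+1`. -/
def SYT.IsSwapped {μ : YoungDiagram} (T T' : SYT μ) (k : ℕ) : Prop :=
  T'.pos k = T.pos (k + 1) ∧ T'.pos (k + 1) = T.pos k ∧
    ∀ m, m ≠ k → m ≠ k + 1 → T'.pos m = T.pos m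

/-- The (signed) axial Manhattan distance from the box of `k` to the box of `k+1` in `T`:
steps up plus steps right minus steps left minus steps down. -/
def SYT.axialDist {μ : YoungDiagram} (T : SYT μ) (k : ℕ) : ℤ :=
  (((T.pos (k + 1)).2 : ℤ) - ((T.pos k).2 : ℤ)) +
    (((T.pos k).1 : ℤ) - ((T.pos (k + 1)).1 : ℤ))

/-- The coefficient `a_k^T`, the reciprocal of the axial distance between the boxes of
`k` and `k+1`. -/
noncomputable def SYT.aCoef {μ : YoungDiagram} (T : SYT μ) (k : ℕ) : ℝ :=
  ((T.axialDist k : ℤ) : ℝ)⁻¹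

/-- The coefficient `b_k^T = √(1 - (a_k^T)²)`. -/
noncomputable def SYT.bCoef {μ : YoungDiagram} (T : SYT μ) (k : ℕ) : ℝ :=
  Real.sqrt (1 - (T.aCoef k) ^ 2)

/-- `ρ`, together with the family of basis vectors `vec` indexed by the standard Young
tableaux of shape `μ`, satisfies the defining rules of the Young orthogonal
(Young–Yamanouchi) representation: adjacent transpositions `(k, k+1)` act by `+1` on `|T⟩`
if `k, k+1` are in the same row of `T`, by `-1` if in the same column, and otherwise by
`(k,k+1)|T⟩ = a|T⟩ + b|(k,k+1)T⟩` with `a` the reciprocal axial distance and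
`b = √(1-a²)`. -/
def YoungOrthogonalRules {μ : YoungDiagram} {V : Type*} [AddCommGroup V] [Module ℝ V]
    (ρ : Equiv.Perm ℕ →* (V →ₗ[ℝ] V)) (vec : SYT μ → V) : Prop :=
  ∀ (T : SYT μ) (k : ℕ), k + 1 < μ.card →
    (T.sameRow k → ρ (Equiv.swap k (k + 1)) (vec T) = vec T) ∧
    (T.sameCol k → ρ (Equiv.swap k (k + 1)) (vec T) = -vec T) ∧
    (¬T.sameRow k → ¬T.sameCol k → ∀ T' : SYT μ, SYT.IsSwapped T T' k →
      ρ (Equiv.swap k (k + 1)) (vec T) = T.aCoef k • vec T + T.bCoef k • vec T')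

open Equiv Equiv.Perm

theorem swap_eq_swap_mul_swap_succ_mul_swap {i j : ℕ} (hij : i ≤ j) :
    swap i (j + 1) = swap i j * swap j (j + 1) * swap i j := by
  ext x
  simp only [Perm.mul_apply, swap_apply_def]
  split_ifs <;> omega

theorem swap_mem_of_forall_swap_succ_mem {S : Submonoid (Perm ℕ)} {a b : ℕ}
    (h : ∀ k, a ≤ k → k + 1 ≤ b → swap k (k + 1) ∈ S) {i j : ℕ} (hai : a ≤ i) (hij : i ≤ j)
    (hjb : j ≤ b) : swap i j ∈ S := by
  induction j, hij using Nat.le_induction with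
  | base =>
    rw [swap_self, ← Perm.one_def]
    exact S.one_mem
  | succ j hij ih =>
    rw [swap_eq_swap_mul_swap_succ_mul_swap hij]
    have hi := ih (by omega)
    exact mul_mem (mul_mem hi (h j (by omega) hjb)) hi

theorem ofSubtype_mem_of_forall_swap_succ_mem {S : Submonoid (Perm ℕ)} {a b : ℕ}
    (h : ∀ k, a ≤ k → k + 1 ≤ b → swap k (k + 1) ∈ S) (σ : Perm {x // x ∈ Finset.Icc a b}) :
    ofSubtype σ ∈ S := by
  induction σ using swap_induction_on with
  | one =>
    rw [map_one]
    exact S.one_mem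
  | swap_mul σ x y _ hσ =>
    rw [map_mul, ofSubtype_swap_eq]
    refine mul_mem ?_ hσ
    have hx := Finset.mem_Icc.1 x.2
    have hy := Finset.mem_Icc.1 y.2
    rcases le_total (x : ℕ) y with hxy | hyx
    · exact swap_mem_of_forall_swap_succ_mem h hx.1 hxy hy.2
    · rw [swap_comm]
      exact swap_mem_of_forall_swap_succ_mem h hy.1 hyx hx.2

theorem swap_succ_apply_lt_iff {k c : ℕ} (hk : k + 1 < c) (m : ℕ) :
    swap k (k + 1) m < c ↔ m < c := by
  simp only [swap_apply_def]
  split_ifs <;> omega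

theorem lt_of_swap_succ_apply_lt {k m l : ℕ} (h : swap k (k + 1) m < swap k (k + 1) l)
    (hne : ¬(swap k (k + 1) m = k ∧ swap k (k + 1) l = k + 1)) : m < l := by
  simp only [swap_apply_def] at h hne
  split_ifs at h hne <;> omega

theorem swap_succ_apply_mem_iff {A : Finset ℕ} {k : ℕ} (hk : k ∈ A) (hk1 : k + 1 ∈ A)
    (m : ℕ) : swap k (k + 1) m ∈ A ↔ m ∈ A := by
  rcases eq_or_ne m k with rfl | hmk
  · simp [hk, hk1]
  rcases eq_or_ne m (k + 1) with rfl | hmk1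
  · simp [hk, hk1]
  rw [swap_apply_of_ne_of_ne hmk hmk1]

theorem LinearIndependent.exists_linearMap_apply_eq {K V W ι : Type*} [Field K]
    [AddCommGroup V] [Module K V] [AddCommGroup W] [Module K W] {v : ι → V}
    (hv : LinearIndependent K v) (f : ι → W) : ∃ φ : V →ₗ[K] W, ∀ i, φ (v i) = f i := by
  obtain ⟨φ, hφ⟩ := LinearMap.exists_extend ((Module.Basis.span hv).constr K f)
  refine ⟨φ, fun i => ?_⟩
  have h := LinearMap.congr_fun hφ (Module.Basis.span hv i)
  rwa [LinearMap.comp_apply, Module.Basis.constr_basis, Submodule.subtype_apply,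
    Module.Basis.coe_span_apply] at h

section Preserving

variable {G R V W : Type*} [Monoid G] [CommRing R] [AddCommGroup V] [Module R V]
  [AddCommGroup W] [Module R W]

def preservingSubmonoid (ρ : G →* (V →ₗ[R] V)) (M : Submodule R V) (φ : V →ₗ[R] W) :
    Submonoid G where
  carrier := {g | ∀ x ∈ M, ρ g x ∈ M ∧ φ (ρ g x) = φ x}
  one_mem' x hx := by simpa using hx
  mul_mem' {g h} hg hh x hx := by
    obtain ⟨hhM, hhφ⟩ := hh x hx
    obtain ⟨hgM, hgφ⟩ := hg _ hhM
    simpa using ⟨hgM, hgφ.trans hhφ⟩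

theorem mem_preservingSubmonoid_span {ρ : G →* (V →ₗ[R] V)} {s : Set V} {φ : V →ₗ[R] W} {g : G}
    (h : ∀ x ∈ s, ρ g x ∈ Submodule.span R s ∧ φ (ρ g x) = φ x) :
    g ∈ preservingSubmonoid ρ (Submodule.span R s) φ := by
  intro x hx
  induction hx using Submodule.span_induction with
  | mem x hx => exact h x hx
  | zero => simp
  | add x y _ _ hx hy => simpa using ⟨add_mem hx.1 hy.1, by rw [hx.2, hy.2]⟩
  | smul c x _ hx => simpa using ⟨Submodule.smul_mem _ c hx.1, by rw [hx.2]⟩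

end Preserving

noncomputable def inversionFactor (r : ℝ) : ℝ := √((r - 1) / (r + 1))

theorem inversionFactor_pos {r : ℝ} (hr : 1 < r) : 0 < inversionFactor r :=
  Real.sqrt_pos.2 (div_pos (by linarith) (by linarith))

theorem sqrt_one_sub_inv_sq {r : ℝ} (hr : 1 ≤ r) :
    √(1 - r⁻¹ ^ 2) = inversionFactor r * ((r + 1) / r) := by
  have h : 1 - r⁻¹ ^ 2 = (r - 1) / (r + 1) * ((r + 1) / r) ^ 2 := by
    field_simp
    ring
  rw [h, Real.sqrt_mul (div_nonneg (by linarith) (by linarith)),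
    Real.sqrt_sq (by positivity), inversionFactor]

theorem inv_add_sqrt_one_sub_inv_sq_mul_inversionFactor {r : ℝ} (hr : 1 ≤ r) :
    r⁻¹ + √(1 - r⁻¹ ^ 2) * inversionFactor r = 1 := by
  have hsq : inversionFactor r ^ 2 = (r - 1) / (r + 1) :=
    Real.sq_sqrt (div_nonneg (by linarith) (by linarith))
  rw [sqrt_one_sub_inv_sq hr]
  calc r⁻¹ + inversionFactor r * ((r + 1) / r) * inversionFactor r
      = r⁻¹ + inversionFactor r ^ 2 * ((r + 1) / r) := by ring
    _ = 1 := by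
      rw [hsq]
      field_simp
      ring

theorem neg_inv_mul_inversionFactor_add_sqrt_one_sub_inv_sq {r : ℝ} (hr : 1 ≤ r) :
    -r⁻¹ * inversionFactor r + √(1 - r⁻¹ ^ 2) = inversionFactor r := by
  rw [sqrt_one_sub_inv_sq hr]
  field_simp
  ring

/-- The content `c - r` of the box in row `r` and column `c`. -/
def boxContent (c : ℕ × ℕ) : ℤ := c.2 - c.1

namespace SYT

variable {μ : YoungDiagram}

def swapEntries (T : SYT μ) (k : ℕ) (hk : k + 1 < μ.card) (hrow : ¬T.sameRow k)
    (hcol : ¬T.sameCol k) : SYT μ where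
  pos m := T.pos (swap k (k + 1) m)
  mem m hm := T.mem _ ((swap_succ_apply_lt_iff hk m).2 hm)
  surj c hc := by
    obtain ⟨m, hm, rfl⟩ := T.surj c hc
    exact ⟨swap k (k + 1) m, (swap_succ_apply_lt_iff hk m).2 hm, by rw [swap_apply_self]⟩
  inj m l hm hl h := (swap k (k + 1)).injective <|
    T.inj _ _ ((swap_succ_apply_lt_iff hk m).2 hm) ((swap_succ_apply_lt_iff hk l).2 hl) h
  row_incr m l hm hl hr hc := by
    refine lt_of_swap_succ_apply_lt (T.row_incr _ _ ((swap_succ_apply_lt_iff hk m).2 hm)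
      ((swap_succ_apply_lt_iff hk l).2 hl) hr hc) ?_
    rintro ⟨hm, hl⟩
    rw [hm, hl] at hr
    exact hrow hr
  col_incr m l hm hl hc hr := by
    refine lt_of_swap_succ_apply_lt (T.col_incr _ _ ((swap_succ_apply_lt_iff hk m).2 hm)
      ((swap_succ_apply_lt_iff hk l).2 hl) hc hr) ?_
    rintro ⟨hm, hl⟩
    rw [hm, hl] at hc
    exact hcol hc
  out m hm := by
    rw [swap_apply_of_ne_of_ne (by omega) (by omega)]
    exact T.out m hm

theorem isSwapped_swapEntries (T : SYT μ) {k : ℕ} (hk : k + 1 < μ.card) (hrow : ¬T.sameRow k)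
    (hcol : ¬T.sameCol k) : T.IsSwapped (T.swapEntries k hk hrow hcol) k :=
  ⟨congrArg T.pos (swap_apply_left k (k + 1)), congrArg T.pos (swap_apply_right k (k + 1)),
    fun _ hmk hmk1 => congrArg T.pos (swap_apply_of_ne_of_ne hmk hmk1)⟩

theorem IsSwapped.pos_eq {T T' : SYT μ} {k : ℕ} (h : T.IsSwapped T' k) (m : ℕ) :
    T'.pos m = T.pos (swap k (k + 1) m) := by
  obtain ⟨hk, hk1, hm⟩ := h
  rcases eq_or_ne m k with rfl | hmk
  · rwa [swap_apply_left]
  rcases eq_or_ne m (k + 1) with rfl | hmk1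
  · rwa [swap_apply_right]
  rw [swap_apply_of_ne_of_ne hmk hmk1, hm m hmk hmk1]

theorem IsSwapped.symm {T T' : SYT μ} {k : ℕ} (h : T.IsSwapped T' k) : T'.IsSwapped T k :=
  ⟨h.2.1.symm, h.1.symm, fun m hmk hmk1 => (h.2.2 m hmk hmk1).symm⟩

theorem axialDist_eq (T : SYT μ) (k : ℕ) :
    T.axialDist k = boxContent (T.pos (k + 1)) - boxContent (T.pos k) := by
  unfold axialDist boxContent
  ring

def AgreesOff (T T' : SYT μ) (A : Finset ℕ) : Prop :=
  ∀ m ∉ A, T'.pos m = T.pos m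

theorem IsSwapped.agreesOff {T T' T'' : SYT μ} {A : Finset ℕ} {k : ℕ} (hk : k ∈ A)
    (hk1 : k + 1 ∈ A) (hT' : T.AgreesOff T' A) (h : T'.IsSwapped T'' k) : T.AgreesOff T'' A :=
  fun m hm => (h.2.2 m (fun h => hm (h ▸ hk)) (fun h => hm (h ▸ hk1))).trans (hT' m hm)

section HorizontalStrip

variable {T T' : SYT μ} {A : Finset ℕ} {a b : ℕ}

/-- In a horizontal strip of consecutive entries, an entry further right is weakly higher: the
box above it in the row of the other entry would hold an entry of the strip in the same column. -/
theorem row_le_of_col_lt_of_horizontalStrip (hsub : ∀ x ∈ Finset.Icc a b, x < μ.card)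
    (hstrip : ∀ x ∈ Finset.Icc a b, ∀ y ∈ Finset.Icc a b, (T.pos x).2 = (T.pos y).2 → x = y)
    {y z : ℕ} (hy : y ∈ Finset.Icc a b) (hz : z ∈ Finset.Icc a b)
    (hcol : (T.pos y).2 < (T.pos z).2) : (T.pos z).1 ≤ (T.pos y).1 := by
  by_contra! hrow
  have hzμ : T.pos z ∈ μ := T.mem z (hsub z hz)
  obtain ⟨m, hm, hpm⟩ := T.surj ((T.pos y).1, (T.pos z).2) (μ.up_left_mem hrow.le le_rfl hzμ)
  have hym : y < m := T.row_incr y m (hsub y hy) hm (by rw [hpm]) (by rwa [hpm])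
  have hmz : m < z := T.col_incr m z hm (hsub z hz) (by rw [hpm]) (by rwa [hpm])
  have hmA : m ∈ Finset.Icc a b := by
    simp only [Finset.mem_Icc] at hy hz ⊢
    omega
  have := hstrip m hmA z hz (by rw [hpm])
  omega

theorem AgreesOff.exists_pos_eq (hsub : ∀ x ∈ A, x < μ.card) (hT' : T.AgreesOff T' A) {x : ℕ}
    (hx : x ∈ A) : ∃ y ∈ A, T'.pos x = T.pos y := by
  obtain ⟨y, hy, hpy⟩ := T.surj _ (T'.mem x (hsub x hx))
  refine ⟨y, ?_, hpy.symm⟩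
  by_contra hyA
  rw [← T'.inj y x hy (hsub x hx) ((hT' y hyA).trans hpy)] at hx
  exact hyA hx

theorem AgreesOff.col_ne (hsub : ∀ x ∈ A, x < μ.card)
    (hstrip : ∀ x ∈ A, ∀ y ∈ A, (T.pos x).2 = (T.pos y).2 → x = y) (hT' : T.AgreesOff T' A)
    {i j : ℕ} (hi : i ∈ A) (hj : j ∈ A) (hij : i ≠ j) : (T'.pos i).2 ≠ (T'.pos j).2 := by
  obtain ⟨y, hy, hpy⟩ := hT'.exists_pos_eq hsub hi
  obtain ⟨z, hz, hpz⟩ := hT'.exists_pos_eq hsub hj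
  intro hcol
  rw [hpy, hpz] at hcol
  refine hij (T'.inj i j (hsub i hi) (hsub j hj) ?_)
  rw [hpy, hpz, hstrip y hy z hz hcol]

theorem AgreesOff.row_le_of_col_lt (hsub : ∀ x ∈ Finset.Icc a b, x < μ.card)
    (hstrip : ∀ x ∈ Finset.Icc a b, ∀ y ∈ Finset.Icc a b, (T.pos x).2 = (T.pos y).2 → x = y)
    (hT' : T.AgreesOff T' (Finset.Icc a b)) {i j : ℕ} (hi : i ∈ Finset.Icc a b)
    (hj : j ∈ Finset.Icc a b) (hcol : (T'.pos i).2 < (T'.pos j).2) :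
    (T'.pos j).1 ≤ (T'.pos i).1 := by
  obtain ⟨y, hy, hpy⟩ := hT'.exists_pos_eq hsub hi
  obtain ⟨z, hz, hpz⟩ := hT'.exists_pos_eq hsub hj
  rw [hpy, hpz] at hcol ⊢
  exact row_le_of_col_lt_of_horizontalStrip hsub hstrip hy hz hcol

end HorizontalStrip

def inversions (A : Finset ℕ) (T : SYT μ) : Finset (ℕ × ℕ) :=
  (A ×ˢ A).filter fun p => p.1 < p.2 ∧ (T.pos p.2).2 < (T.pos p.1).2

noncomputable def weight (A : Finset ℕ) (T : SYT μ) : ℝ :=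
  ∏ p ∈ inversions A T, inversionFactor (boxContent (T.pos p.1) - boxContent (T.pos p.2) : ℤ)

theorem inversions_of_isSwapped {T T' : SYT μ} {A : Finset ℕ} {k : ℕ} (hk : k ∈ A)
    (hk1 : k + 1 ∈ A) (h : T.IsSwapped T' k) (hcol : (T.pos k).2 < (T.pos (k + 1)).2) :
    inversions A T' = insert (k, k + 1)
      ((inversions A T).map (prodCongr (swap k (k + 1)) (swap k (k + 1))).toEmbedding) := by
  ext ⟨i, j⟩
  simp only [inversions, Finset.mem_insert, Finset.mem_map_equiv, Finset.mem_filter,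
    Finset.mem_product, prodCongr_symm, symm_swap, prodCongr_apply, Prod.map, Prod.mk.injEq,
    h.pos_eq, swap_succ_apply_mem_iff hk hk1]
  by_cases hij : i = k ∧ j = k + 1
  · obtain ⟨rfl, rfl⟩ := hij
    simpa [hk, hk1] using hcol
  simp only [hij, false_or]
  refine and_congr_right fun _ => ?_
  constructor <;> rintro ⟨hlt, hc⟩ <;> refine ⟨?_, hc⟩ <;>
    simp only [swap_apply_def] at hlt hc hij ⊢ <;> split_ifs at hlt hc ⊢ <;> omega


theorem weight_of_isSwapped {T T' : SYT μ} {A : Finset ℕ} {k : ℕ} (hk : k ∈ A)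
    (hk1 : k + 1 ∈ A) (h : T.IsSwapped T' k) (hcol : (T.pos k).2 < (T.pos (k + 1)).2) :
    weight A T' = inversionFactor (T.axialDist k : ℤ) * weight A T := by
  have hnot : (k, k + 1) ∉
      (inversions A T).map (prodCongr (swap k (k + 1)) (swap k (k + 1))).toEmbedding := by
    simp [inversions]
  rw [weight, inversions_of_isSwapped hk hk1 h hcol, Finset.prod_insert hnot, Finset.prod_map,
    axialDist_eq, h.1, h.2.1, weight]
  congr 1
  refine Finset.prod_congr rfl fun p _ => ?_
  simp [h.pos_eq]

theorem weight_pos {T T' : SYT μ} {a b : ℕ} (hsub : ∀ x ∈ Finset.Icc a b, x < μ.card)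
    (hstrip : ∀ x ∈ Finset.Icc a b, ∀ y ∈ Finset.Icc a b, (T.pos x).2 = (T.pos y).2 → x = y)
    (hT' : T.AgreesOff T' (Finset.Icc a b)) : 0 < weight (Finset.Icc a b) T' := by
  refine Finset.prod_pos fun p hp => inversionFactor_pos ?_
  simp only [inversions, Finset.mem_filter, Finset.mem_product] at hp
  obtain ⟨⟨hi, hj⟩, hlt, hcol⟩ := hp
  have hrow := hT'.row_le_of_col_lt hsub hstrip hj hi hcol
  -- in a common row, `p.2` left of `p.1` would force `p.2 < p.1`
  have hrow_ne : (T'.pos p.1).1 ≠ (T'.pos p.2).1 := fun hrow_eq =>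
    (T'.row_incr _ _ (hsub _ hj) (hsub _ hi) hrow_eq.symm hcol).not_gt hlt
  unfold boxContent
  push_cast
  have : ((T'.pos p.2).2 : ℝ) + 1 ≤ (T'.pos p.1).2 := by exact_mod_cast hcol
  have : ((T'.pos p.1).1 : ℝ) + 1 ≤ (T'.pos p.2).1 := by exact_mod_cast (by omega)
  linarith

section YoungRule

variable {T T' T'' : SYT μ} {a b k : ℕ}

theorem AgreesOff.one_le_axialDist (hsub : ∀ x ∈ Finset.Icc a b, x < μ.card)
    (hstrip : ∀ x ∈ Finset.Icc a b, ∀ y ∈ Finset.Icc a b, (T.pos x).2 = (T.pos y).2 → x = y)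
    (hT' : T.AgreesOff T' (Finset.Icc a b)) (hk : k ∈ Finset.Icc a b)
    (hk1 : k + 1 ∈ Finset.Icc a b) (hcol : (T'.pos k).2 < (T'.pos (k + 1)).2) :
    (1 : ℝ) ≤ T'.axialDist k := by
  have := hT'.row_le_of_col_lt hsub hstrip hk hk1 hcol
  exact_mod_cast (show 1 ≤ T'.axialDist k by unfold axialDist; omega)

theorem axialDist_of_isSwapped (h : T.IsSwapped T' k) : T'.axialDist k = -T.axialDist k := by
  unfold axialDist
  rw [h.1, h.2.1]
  ring

theorem aCoef_mul_weight_add_bCoef_mul_weight (hsub : ∀ x ∈ Finset.Icc a b, x < μ.card)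
    (hstrip : ∀ x ∈ Finset.Icc a b, ∀ y ∈ Finset.Icc a b, (T.pos x).2 = (T.pos y).2 → x = y)
    (hT' : T.AgreesOff T' (Finset.Icc a b)) (hk : k ∈ Finset.Icc a b)
    (hk1 : k + 1 ∈ Finset.Icc a b) (hsw : T'.IsSwapped T'' k) :
    T'.aCoef k * weight (Finset.Icc a b) T' + T'.bCoef k * weight (Finset.Icc a b) T'' =
      weight (Finset.Icc a b) T' := by
  rcases (hT'.col_ne hsub hstrip hk hk1 k.succ_ne_self.symm).lt_or_gt with hlt | hgt
  · rw [weight_of_isSwapped hk hk1 hsw hlt, bCoef, aCoef]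
    have hd := hT'.one_le_axialDist hsub hstrip hk hk1 hlt
    linear_combination weight (Finset.Icc a b) T' *
      inv_add_sqrt_one_sub_inv_sq_mul_inversionFactor hd
  · have hlt : (T''.pos k).2 < (T''.pos (k + 1)).2 := by rwa [hsw.1, hsw.2.1]
    have hd := (hsw.agreesOff hk hk1 hT').one_le_axialDist hsub hstrip hk hk1 hlt
    rw [weight_of_isSwapped hk hk1 hsw.symm hlt, bCoef, aCoef, axialDist_of_isSwapped hsw.symm]
    push_cast
    rw [inv_neg, neg_sq]
    linear_combination weight (Finset.Icc a b) T'' *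
      neg_inv_mul_inversionFactor_add_sqrt_one_sub_inv_sq hd

theorem swap_succ_mem_preservingSubmonoid {V : Type*} [AddCommGroup V] [Module ℝ V]
    {ρ : Perm ℕ →* (V →ₗ[ℝ] V)} {vec : SYT μ → V} (hrules : YoungOrthogonalRules ρ vec)
    {φ : V →ₗ[ℝ] ℝ} (hφ : ∀ T', φ (vec T') = weight (Finset.Icc a b) T')
    (hsub : ∀ x ∈ Finset.Icc a b, x < μ.card)
    (hstrip : ∀ x ∈ Finset.Icc a b, ∀ y ∈ Finset.Icc a b, (T.pos x).2 = (T.pos y).2 → x = y)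
    (hk : k ∈ Finset.Icc a b) (hk1 : k + 1 ∈ Finset.Icc a b) :
    swap k (k + 1) ∈ preservingSubmonoid ρ
      (Submodule.span ℝ (vec '' {T' | T.AgreesOff T' (Finset.Icc a b)})) φ := by
  refine mem_preservingSubmonoid_span ?_
  rintro _ ⟨T', hT', rfl⟩
  have hkμ := hsub _ hk1
  have hcol : ¬T'.sameCol k := hT'.col_ne hsub hstrip hk hk1 k.succ_ne_self.symm
  by_cases hrow : T'.sameRow k
  · rw [(hrules T' k hkμ).1 hrow]
    exact ⟨Submodule.subset_span ⟨T', hT', rfl⟩, rfl⟩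
  · have hsw := T'.isSwapped_swapEntries hkμ hrow hcol
    rw [(hrules T' k hkμ).2.2 hrow hcol _ hsw]
    refine ⟨add_mem (Submodule.smul_mem _ _ (Submodule.subset_span ⟨T', hT', rfl⟩))
      (Submodule.smul_mem _ _ (Submodule.subset_span ⟨_, hsw.agreesOff hk hk1 hT', rfl⟩)), ?_⟩
    rw [map_add, map_smul, map_smul, hφ, hφ, smul_eq_mul, smul_eq_mul]
    exact aCoef_mul_weight_add_bCoef_mul_weight hsub hstrip hT' hk hk1 hsw

end YoungRule

end SYT

/-- Let `A = {a, …, b}` be a set of consecutive integers occurring as entries of the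
standard Young tableau `T`, such that no two elements of `A` lie in the same column of
`T` (the boxes of `A` form a horizontal strip). Then `Σ_{π ∈ S_A} λ(π)|T⟩ ≠ 0` in the
Young orthogonal representation, whose basis vectors `vec` are linearly independent. -/
theorem young_orthogonal_horizontal_nonzero {μ : YoungDiagram} {V : Type*}
    [AddCommGroup V] [Module ℝ V] (ρ : Equiv.Perm ℕ →* (V →ₗ[ℝ] V)) (vec : SYT μ → V)
    (hrules : YoungOrthogonalRules ρ vec) (hli : LinearIndependent ℝ vec)
    (T : SYT μ) (a b : ℕ) (A : Finset ℕ) (hA : A = Finset.Icc a b)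
    (hsub : ∀ x ∈ A, x < μ.card)
    (hstrip : ∀ x ∈ A, ∀ y ∈ A, (T.pos x).2 = (T.pos y).2 → x = y) :
    ∑ σ : Equiv.Perm {x : ℕ // x ∈ A},
      ρ (σ.extendDomain (Equiv.refl {x : ℕ // x ∈ A})) (vec T) ≠ 0 := by
  subst hA
  obtain ⟨φ, hφ⟩ := hli.exists_linearMap_apply_eq (SYT.weight (Finset.Icc a b))
  have hterm (σ : Perm {x // x ∈ Finset.Icc a b}) :
      φ (ρ (σ.extendDomain (Equiv.refl _)) (vec T)) = SYT.weight (Finset.Icc a b) T := by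
    have hσ := ofSubtype_mem_of_forall_swap_succ_mem (fun k hak hkb =>
      SYT.swap_succ_mem_preservingSubmonoid hrules hφ hsub hstrip
        (Finset.mem_Icc.2 ⟨hak, by omega⟩) (Finset.mem_Icc.2 ⟨by omega, hkb⟩)) σ
    exact (hσ (vec T) (Submodule.subset_span ⟨T, fun _ _ => rfl, rfl⟩)).2.trans (hφ T)
  intro hzero
  have h := congrArg φ hzero
  rw [map_sum, Finset.sum_congr rfl fun σ _ => hterm σ, Finset.sum_const, map_zero,
    nsmul_eq_mul] at h
  exact (mul_pos (by simp [Fintype.card_pos]) (SYT.weight_pos hsub hstrip fun _ _ => rfl)).ne' h
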